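/- arXiv:1002.3319 — 3 statements merged into one kernel-verified Lean document; each statement's English description precedes it below -/
import Mathlib

section
/- There exists a constant C > 0 such that |R̃(x, 1)| ≤ C·x for all 0 < x < 1/2. -/
open MeasureTheory Real Set Filter Topology

noncomputable section

/-- The measure dμ(x) = x^α dx on (0,∞). -/
def muMeas (α : ℝ) : Measure ℝ :=
  (volume.restrict (Set.Ioi (0:ℝ))).withDensity (fun x => ENNReal.ofReal (x ^ α))

/-- Modified Bessel function of the first kind. -/
def modBesselI (ν z : ℝ) : ℝ :=
  ∑' k : ℕ, (z / 2) ^ (2 * (k : ℝ) + ν) / ((Nat.factorial k : ℝ) * Real.Gamma ((k : ℝ) + ν + 1))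

/-- Bessel heat kernel. -/
def besselHeat (α t x y : ℝ) : ℝ :=
  (2 * t)⁻¹ * Real.exp (-(x ^ 2 + y ^ 2) / (4 * t)) *
    modBesselI ((α - 1) / 2) (x * y / (2 * t)) * (x * y) ^ (-(α - 1) / 2)

/-- Bessel Riesz kernel. -/
def besselRiesz (α x y : ℝ) : ℝ :=
  ∫ t in Set.Ioi (0:ℝ), deriv (fun u => besselHeat α t u y) x / Real.sqrt t

/-- Laguerre heat kernel. -/
def laguerreHeat (α t x y : ℝ) : ℝ :=
  (2 * Real.exp (-2 * t) / (1 - Real.exp (-4 * t))) * (x * y) ^ (-(α - 1) / 2) *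
    Real.exp (-(1 / 2) * ((1 + Real.exp (-4 * t)) / (1 - Real.exp (-4 * t))) * (x ^ 2 + y ^ 2)) *
    modBesselI ((α - 1) / 2) (2 * Real.exp (-2 * t) * x * y / (1 - Real.exp (-4 * t)))

/-- Laguerre Riesz kernel. -/
def laguerreRiesz (α x y : ℝ) : ℝ :=
  ∫ t in Set.Ioi (0:ℝ), deriv (fun u => laguerreHeat α t u y) x / Real.sqrt t

def constA (α : ℝ) : ℝ := -2 * Real.Gamma (1 + α / 2) / Real.Gamma ((1 + α) / 2)

def constB (α : ℝ) : ℝ := -(α + 1) / Real.sqrt π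

/-- ρ(y) = 1 for y < 1, 1/y for y ≥ 1. -/
def rhoAux (y : ℝ) : ℝ := if y < 1 then 1 else y⁻¹

/-- Membership in the test-function class Ω(X). -/
def memOmega (α : ℝ) (ω : ℝ → ℝ) : Prop :=
  ContDiffOn ℝ 1 ω (Set.Ioi 0) ∧
  BddAbove (Set.range fun x : Set.Ioi (0:ℝ) => |ω x.1|) ∧
  BddAbove (Set.range fun x : Set.Ioi (0:ℝ) => |x.1 * deriv ω x.1|) ∧
  Integrable (fun x => |ω x| / x) (muMeas α)

/-- sup over (0,∞) of |f|. -/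
def supNormPos (f : ℝ → ℝ) : ℝ := ⨆ x : Set.Ioi (0:ℝ), |f x.1|

/-- ‖ω‖_∞ + ‖x ω'(x)‖_∞ + ∫ |ω(x)|/x dμ(x). -/
def omegaBound (α : ℝ) (ω : ℝ → ℝ) : ℝ :=
  supNormPos ω + supNormPos (fun x => x * deriv ω x) + ∫ x, |ω x| / x ∂(muMeas α)

/-- The fixed cutoff: nonnegative, smooth, supported in (-2,2), equal to 1 on [-3/2,3/2]. -/
def isGoodPhi (φ : ℝ → ℝ) : Prop :=
  (∀ x, 0 ≤ φ x) ∧ ContDiff ℝ (⊤ : ℕ∞) φ ∧ Function.support φ ⊆ Set.Ioo (-2 : ℝ) 2 ∧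
    ∀ x : ℝ, |x| ≤ 3 / 2 → φ x = 1

/-- The interval B(y₀,r) = {x ∈ (0,∞) : |x - y₀| < r}. -/
def ball0 (y₀ r : ℝ) : Set ℝ := {x | 0 < x ∧ |x - y₀| < r}

/-- h^{1,m}(X)-atom. -/
def isLocalAtom (α m : ℝ) (a : ℝ → ℝ) : Prop :=
  ∃ y₀ r : ℝ, 0 < y₀ ∧ 0 < r ∧ r ≤ m ∧
    Function.support a ⊆ ball0 y₀ r ∧
    eLpNorm a ⊤ (muMeas α) ≤ (muMeas α (ball0 y₀ r))⁻¹ ∧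
    (r ≤ m / 4 → ∫ x, a x ∂(muMeas α) = 0)

/-- H¹(X)-atom. -/
def isH1Atom (α : ℝ) (a : ℝ → ℝ) : Prop :=
  ∃ y₀ r : ℝ, 0 < y₀ ∧ 0 < r ∧ r ≤ rhoAux y₀ ∧
    Function.support a ⊆ ball0 y₀ r ∧
    eLpNorm a ⊤ (muMeas α) ≤ (muMeas α (ball0 y₀ r))⁻¹ ∧
    (r ≤ rhoAux y₀ / 4 → ∫ x, a x ∂(muMeas α) = 0)

/-- g(x,y) = R(x,y) - φ((x-y)/ρ(y))·(B/(x^{α+1}-y^{α+1}) + (A-B)/(x^{α+1}+y^{α+1})). -/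
def gKernel (α : ℝ) (φ : ℝ → ℝ) (x y : ℝ) : ℝ :=
  laguerreRiesz α x y - φ ((x - y) / rhoAux y) *
    (constB α / (x ^ (α + 1) - y ^ (α + 1)) +
      (constA α - constB α) / (x ^ (α + 1) + y ^ (α + 1)))

/-- (r̃^m)*ω(y), principal value, as a limit along 𝓝[>] 0. -/
def rstarLoc (α m : ℝ) (φ : ℝ → ℝ) (ω : ℝ → ℝ) (y : ℝ) : ℝ :=
  limUnder (𝓝[>] (0:ℝ)) fun ε =>
    ∫ x in {x | ε < |x - y|}, besselRiesz α x y * φ ((x - y) / m) * ω x ∂(muMeas α)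

/-- R*ω(y) for the Laguerre Riesz kernel, principal value. -/
def rstarLag (α : ℝ) (ω : ℝ → ℝ) (y : ℝ) : ℝ :=
  limUnder (𝓝[>] (0:ℝ)) fun ε =>
    ∫ x in {x | ε < |x - y|}, laguerreRiesz α x y * ω x ∂(muMeas α)

end


/- ===== Auxiliary material for the proof of stmt2 ===== -/

noncomputable section StmtTwoAux

/-- Coefficients of the even power-series expansion of the Bessel heat kernel at y = 1. -/
def aCoef (ν t : ℝ) (k : ℕ) : ℝ :=
  (4*t) ^ (-ν) * ((4*t)⁻¹) ^ (2*k) / (k.factorial * Real.Gamma ((k:ℝ) + ν + 1))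

/-- Smooth (entire in u) version of the Bessel heat kernel at y = 1. -/
def Hfun (ν t u : ℝ) : ℝ :=
  (2*t)⁻¹ * Real.exp (-(u^2+1)/(4*t)) * ∑' k : ℕ, aCoef ν t k * u^(2*k)

end StmtTwoAux

lemma gammaFactBound {ν : ℝ} (hν : -(1/2 : ℝ) ≤ ν) :
    ∀ k : ℕ, Real.Gamma (ν + 1) * (2 * k).factorial ≤ 4 ^ k * k.factorial * Real.Gamma ((k : ℝ) + ν + 1) := by
  intro k
  induction k with
  | zero => simp
  | succ k ih =>
    have hkpos : (0:ℝ) < (k : ℝ) + ν + 1 := by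
      have : (0:ℝ) ≤ (k:ℝ) := Nat.cast_nonneg k
      linarith
    have hG : 0 < Real.Gamma ((k : ℝ) + ν + 1) := Real.Gamma_pos_of_pos hkpos
    have hrec : Real.Gamma (((k:ℕ)+1 : ℕ) + ν + 1) = ((k:ℝ) + ν + 1) * Real.Gamma ((k:ℝ) + ν + 1) := by
      push_cast
      rw [show (k:ℝ) + 1 + ν + 1 = ((k:ℝ) + ν + 1) + 1 by ring, Real.Gamma_add_one (ne_of_gt hkpos)]
    have hfac : ((2 * (k+1)).factorial : ℝ) = (2*k+2) * ((2*k+1) * ((2*k).factorial : ℝ)) := by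
      have : 2 * (k+1) = (2*k+1) + 1 := by ring
      rw [this, Nat.factorial_succ, Nat.factorial_succ]
      push_cast; ring
    have hfacpos : (0:ℝ) < ((2*k).factorial : ℝ) := by positivity
    have hkfacpos : (0:ℝ) < (k.factorial : ℝ) := by positivity
    have h4 : (0:ℝ) < 4 ^ k := by positivity
    rw [hrec, hfac]
    have hstep : ((2:ℝ)*k+2) * (2*k+1) ≤ 4 * (k+1) * ((k:ℝ) + ν + 1) := by
      nlinarith [Nat.cast_nonneg (α := ℝ) k]
    calc Real.Gamma (ν + 1) * ((2*k+2) * ((2*k+1) * ((2*k).factorial:ℝ)))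
        = (Real.Gamma (ν+1) * (2*k).factorial) * ((2*k+2)*(2*k+1)) := by ring
      _ ≤ (4 ^ k * k.factorial * Real.Gamma ((k:ℝ)+ν+1)) * (4 * (k+1) * ((k:ℝ)+ν+1)) := by
          apply mul_le_mul ih hstep (by positivity) (by positivity)
      _ = 4 ^ (k+1) * ((k+1) * k.factorial) * (((k:ℝ)+ν+1) * Real.Gamma ((k:ℝ)+ν+1)) := by ring
      _ = 4 ^ (k+1) * (k+1).factorial * (((k:ℝ)+ν+1) * Real.Gamma ((k:ℝ)+ν+1)) := by
          rw [Nat.factorial_succ]; push_cast; ring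

lemma tsum_even_le_exp {s : ℝ} (hs : 0 ≤ s) :
    ∑' k : ℕ, s^(2*k)/(Nat.factorial (2*k)) ≤ Real.exp s := by
  rw [Real.exp_eq_exp_ℝ, NormedSpace.exp_eq_tsum_div]
  apply ((Real.summable_pow_div_factorial s).comp_injective (mul_right_injective₀ two_ne_zero)).tsum_le_tsum_of_inj (fun k => 2*k) (mul_right_injective₀ two_ne_zero)
  · intro c _; positivity
  · intro b; exact le_rfl
  · exact Real.summable_pow_div_factorial s

lemma summable_even (s : ℝ) : Summable (fun k : ℕ => s^(2*k)/(Nat.factorial (2*k))) :=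
  (Real.summable_pow_div_factorial s).comp_injective (mul_right_injective₀ two_ne_zero)

lemma aCoef_nonneg {ν t : ℝ} (hν : -(1/2 : ℝ) < ν) (ht : 0 < t) (k : ℕ) :
    0 ≤ aCoef ν t k := by
  have hG : 0 < Real.Gamma ((k:ℝ) + ν + 1) :=
    Real.Gamma_pos_of_pos (by have : (0:ℝ) ≤ (k:ℝ) := Nat.cast_nonneg k; linarith)
  have h4t : (0:ℝ) < 4*t := by linarith
  unfold aCoef
  positivity

lemma aCoef_le {ν t : ℝ} (hν : -(1/2 : ℝ) < ν) (ht : 0 < t) (k : ℕ) :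
    aCoef ν t k ≤ ((4*t)^(-ν) / Real.Gamma (ν+1)) * ((2*t)⁻¹)^(2*k) / (Nat.factorial (2*k)) := by
  have hG : 0 < Real.Gamma ((k:ℝ) + ν + 1) :=
    Real.Gamma_pos_of_pos (by have : (0:ℝ) ≤ (k:ℝ) := Nat.cast_nonneg k; linarith)
  have hGν : 0 < Real.Gamma (ν+1) := Real.Gamma_pos_of_pos (by linarith)
  have h4t : (0:ℝ) < 4*t := by linarith
  have hrpow : (0:ℝ) < (4*t)^(-ν) := Real.rpow_pos_of_pos h4t _
  have hfac1 : (0:ℝ) < (k.factorial : ℝ) := by positivity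
  have hfac2 : (0:ℝ) < ((2*k).factorial : ℝ) := by positivity
  have hgf := gammaFactBound hν.le k
  have hdiv : (1:ℝ) / (k.factorial * Real.Gamma ((k:ℝ)+ν+1)) ≤ 4^k / (Real.Gamma (ν+1) * (2*k).factorial) := by
    rw [div_le_div_iff₀ (by positivity) (by positivity)]
    nlinarith
  have hpow : ((4*t)⁻¹)^(2*k) * 4^k = ((2*t)⁻¹)^(2*k) := by
    have h1 : ((4*t)⁻¹)^(2*k) = (((4*t)⁻¹)^2)^k := by rw [pow_mul]
    have h2 : ((2*t)⁻¹)^(2*k) = (((2*t)⁻¹)^2)^k := by rw [pow_mul]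
    rw [h1, h2, ← mul_pow]
    congr 1
    field_simp
    ring
  calc aCoef ν t k = (4*t)^(-ν) * ((4*t)⁻¹)^(2*k) * (1 / (k.factorial * Real.Gamma ((k:ℝ)+ν+1))) := by
        unfold aCoef; ring
    _ ≤ (4*t)^(-ν) * ((4*t)⁻¹)^(2*k) * (4^k / (Real.Gamma (ν+1) * (2*k).factorial)) := by
        apply mul_le_mul_of_nonneg_left hdiv (by positivity)
    _ = ((4*t)^(-ν) / Real.Gamma (ν+1)) * (((4*t)⁻¹)^(2*k) * 4^k) / (Nat.factorial (2*k)) := by ring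
    _ = ((4*t)^(-ν) / Real.Gamma (ν+1)) * ((2*t)⁻¹)^(2*k) / (Nat.factorial (2*k)) := by rw [hpow]

lemma besselHeat_eq_Hfun (α : ℝ) {t u : ℝ} (ht : 0 < t) (hu : 0 < u) :
    besselHeat α t u 1 = Hfun ((α-1)/2) t u := by
  set ν := (α-1)/2 with hνdef
  have h4t : (0:ℝ) < 4*t := by linarith
  have hq : (0:ℝ) < u / (4*t) := by positivity
  rw [besselHeat, Hfun, mul_one, one_pow]
  rw [show -(α-1)/2 = -ν from by rw [hνdef]; ring, show (α-1)/2 = ν from hνdef.symm]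
  have key : modBesselI ν (u / (2*t)) * u ^ (-ν) = ∑' k : ℕ, aCoef ν t k * u^(2*k) := by
    rw [modBesselI, ← tsum_mul_right]
    apply tsum_congr
    intro k
    have e1 : u/(2*t)/2 = u/(4*t) := by ring
    have e2 : (u/(4*t)) ^ (2*(k:ℝ)+ν) = (u/(4*t))^(2*k) * (u^ν / (4*t)^ν) := by
      rw [show (2*(k:ℝ)+ν) = ((2*k : ℕ):ℝ) + ν by push_cast; ring, Real.rpow_add hq,
        Real.rpow_natCast, Real.div_rpow hu.le h4t.le]
    have e3 : u ^ ν * u ^ (-ν) = 1 := by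
      rw [← Real.rpow_add hu]; simp
    have e4 : (4*t) ^ (-ν) = ((4*t)^ν)⁻¹ := by
      rw [Real.rpow_neg h4t.le]
    have e5 : (u/(4*t))^(2*k) = u^(2*k) * ((4*t)⁻¹)^(2*k) := by
      rw [div_eq_mul_inv, mul_pow]
    rw [e1, e2, e5, aCoef, e4]
    calc u ^ (2*k) * ((4*t)⁻¹)^(2*k) * (u^ν / (4*t)^ν) / (k.factorial * Real.Gamma ((k:ℝ)+ν+1)) * u^(-ν)
        = u ^ (2*k) * ((4*t)⁻¹)^(2*k) / ((4*t)^ν * (k.factorial * Real.Gamma ((k:ℝ)+ν+1))) * (u^ν * u^(-ν)) := by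
          ring
      _ = ((4*t)^ν)⁻¹ * ((4*t)⁻¹)^(2*k) / (k.factorial * Real.Gamma ((k:ℝ)+ν+1)) * u^(2*k) := by
          rw [e3, mul_one]; ring
  rw [mul_assoc, key]

lemma vstep {c0 w : ℝ} (k : ℕ) (hk : 0 < k) :
    c0 * w^(2*k) / ((2*k).factorial : ℝ) * (2*(k:ℝ)) = c0 * w * (w^(2*k-1)/(((2*k-1).factorial : ℝ))) := by
  set m := 2*k-1 with hm
  have h2k : 2*k = m+1 := by omega
  rw [h2k, pow_succ, Nat.factorial_succ]
  have h1 : ((m:ℝ)+1) ≠ 0 := by positivity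
  have h2 : ((m.factorial : ℝ)) ≠ 0 := by positivity
  have h3 : (2*(k:ℝ)) = (m:ℝ)+1 := by
    have : (2*k : ℕ) = m+1 := h2k
    exact_mod_cast congrArg (Nat.cast : ℕ → ℝ) this
  rw [h3]
  push_cast
  field_simp

lemma hasDerivAt_S {ν t : ℝ} (hν : -(1/2 : ℝ) < ν) (ht : 0 < t) {x : ℝ}
    (hx : x ∈ Set.Ioo (-1:ℝ) 1) :
    HasDerivAt (fun u : ℝ => ∑' k : ℕ, aCoef ν t k * u^(2*k))
      (∑' k : ℕ, aCoef ν t k * ((2*k : ℕ) * x^(2*k-1))) x := by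
  have hGν : 0 < Real.Gamma (ν+1) := Real.Gamma_pos_of_pos (by linarith)
  have h4t : (0:ℝ) < 4*t := by linarith
  have hc0pos : 0 < (4*t)^(-ν) / Real.Gamma (ν+1) := div_pos (Real.rpow_pos_of_pos h4t _) hGν
  have hwpos : 0 < ((2*t):ℝ)⁻¹ := by positivity
  set c0 := (4*t)^(-ν) / Real.Gamma (ν+1) with hc0
  set w := ((2*t) : ℝ)⁻¹ with hw
  set v : ℕ → ℝ := fun k => c0 * w * (w^(2*k-1)/(Nat.factorial (2*k-1))) with hv
  have hinj : Function.Injective (fun k : ℕ => 2*k-1) := by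
    intro a b hab; simp only at hab; omega
  have hvsum : Summable v := by
    have : Summable (fun k : ℕ => w^(2*k-1)/((Nat.factorial (2*k-1)):ℝ)) :=
      (Real.summable_pow_div_factorial w).comp_injective hinj
    exact this.mul_left _
  have hacle : ∀ k : ℕ, aCoef ν t k ≤ c0 * w^(2*k) / (Nat.factorial (2*k)) := by
    intro k
    have := aCoef_le hν ht k
    calc aCoef ν t k ≤ ((4*t)^(-ν) / Real.Gamma (ν+1)) * ((2*t)⁻¹)^(2*k) / (Nat.factorial (2*k)) := this
      _ = c0 * w^(2*k) / (Nat.factorial (2*k)) := by rw [hc0, hw]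
  have hbound : ∀ (k : ℕ) (y : ℝ), y ∈ Set.Ioo (-1:ℝ) 1 →
      ‖aCoef ν t k * ((2*k : ℕ) * y^(2*k-1))‖ ≤ v k := by
    intro k y hy
    have hy1 : |y| ≤ 1 := by
      rw [abs_le]; exact ⟨hy.1.le, hy.2.le⟩
    have hynorm : |y^(2*k-1)| ≤ 1 := by
      rw [abs_pow]; exact pow_le_one₀ (abs_nonneg y) hy1
    have hak := aCoef_nonneg hν ht k
    have h1 : ‖aCoef ν t k * ((2*k : ℕ) * y^(2*k-1))‖ ≤ aCoef ν t k * (2*(k:ℝ)) := by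
      rw [norm_mul, norm_mul, Real.norm_eq_abs, Real.norm_eq_abs, Real.norm_eq_abs,
        abs_of_nonneg hak, Nat.abs_cast]
      calc aCoef ν t k * ((2*k : ℕ) * |y^(2*k-1)|)
          ≤ aCoef ν t k * ((2*k : ℕ) * 1) := by
            apply mul_le_mul_of_nonneg_left _ hak
            apply mul_le_mul_of_nonneg_left hynorm (by positivity)
        _ = aCoef ν t k * (2*(k:ℝ)) := by push_cast; ring
    refine h1.trans ?_
    rcases Nat.eq_zero_or_pos k with hk0 | hkpos
    · subst hk0
      have : v 0 = c0 * w * 1 := by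
        rw [hv]; norm_num
      rw [this]
      simp only [Nat.cast_zero]
      nlinarith [aCoef_nonneg hν ht 0, hc0pos, hwpos]
    · calc aCoef ν t k * (2*(k:ℝ))
          ≤ (c0 * w^(2*k) / (Nat.factorial (2*k))) * (2*(k:ℝ)) := by
            apply mul_le_mul_of_nonneg_right (hacle k) (by positivity)
        _ = v k := vstep k hkpos
  have hsum0 : Summable (fun k : ℕ => aCoef ν t k * (0:ℝ)^(2*k)) := by
    apply summable_of_ne_finset_zero (s := {0})
    intro k hk
    have : 2*k ≠ 0 := by simp at hk; omega
    rw [zero_pow this, mul_zero]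
  exact hasDerivAt_tsum_of_isPreconnected hvsum isOpen_Ioo (convex_Ioo (-1:ℝ) 1).isPreconnected
    (fun k y _ => (hasDerivAt_pow (2*k) y).const_mul (aCoef ν t k))
    hbound (Set.mem_Ioo.2 ⟨by norm_num, by norm_num⟩) hsum0 hx

lemma myPowDivFactLe (x : ℝ) (hx : 0 ≤ x) (n : ℕ) :
    x ^ n / n.factorial ≤ Real.exp x := by
  rw [Real.exp_eq_exp_ℝ, NormedSpace.exp_eq_tsum_div]
  exact (Real.summable_pow_div_factorial x).le_tsum n (fun m _ => by positivity)


lemma integrable_psi {c : ℝ} (hc : 1 < c) :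
    IntegrableOn (fun t => Real.exp (-1/(16*t)) * t ^ (-c)) (Set.Ioi (0:ℝ)) := by
  have hmeas : MeasureTheory.AEStronglyMeasurable (fun t : ℝ => Real.exp (-1/(16*t)) * t ^ (-c)) volume := by
    apply Measurable.aestronglyMeasurable
    fun_prop
  have h1 : IntegrableOn (fun t => Real.exp (-1/(16*t)) * t ^ (-c)) (Set.Ioc (0:ℝ) 1) := by
    set n : ℕ := ⌈c⌉₊ with hn
    have hnc : c ≤ n := Nat.le_ceil c
    have hbound : ∀ t ∈ Set.Ioc (0:ℝ) 1, ‖Real.exp (-1/(16*t)) * t ^ (-c)‖ ≤ (n.factorial : ℝ) * 16^n := by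
      intro t ht
      obtain ⟨ht0, ht1⟩ := ht
      have h16t : (0:ℝ) < 16*t := by linarith
      have hexp : Real.exp (-1/(16*t)) ≤ (n.factorial : ℝ) * (16*t)^n := by
        have key := myPowDivFactLe (1/(16*t)) (by positivity) n
        have hpos : (0:ℝ) < (1/(16*t))^n / n.factorial := by positivity
        have h2 : (Real.exp (1/(16*t)))⁻¹ ≤ ((1/(16*t))^n / n.factorial)⁻¹ :=
          inv_anti₀ hpos key
        have h3 : ((1/(16*t))^n / (n.factorial:ℝ))⁻¹ = (n.factorial : ℝ) * (16*t)^n := by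
          have hf : ((n.factorial:ℝ)) ≠ 0 := by positivity
          have hp : ((16*t)^n : ℝ) ≠ 0 := by positivity
          rw [inv_div, one_div, inv_pow, div_inv_eq_mul]
        rw [show -1/(16*t) = -(1/(16*t)) from by ring, Real.exp_neg]
        exact h2.trans_eq h3
      have hrpow : t ^ (-c) ≤ t ^ (-(n:ℝ)) := by
        apply Real.rpow_le_rpow_of_exponent_ge ht0 ht1
        linarith
      have hfin : Real.exp (-1/(16*t)) * t ^ (-c) ≤ (n.factorial : ℝ) * 16^n := by
        calc Real.exp (-1/(16*t)) * t ^ (-c)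
            ≤ ((n.factorial : ℝ) * (16*t)^n) * t ^ (-(n:ℝ)) := by
              apply mul_le_mul hexp hrpow (Real.rpow_nonneg ht0.le _) (by positivity)
          _ = (n.factorial : ℝ) * 16^n * (t^n * t ^ (-(n:ℝ))) := by
              rw [mul_pow]; ring
          _ = (n.factorial : ℝ) * 16^n := by
              rw [← Real.rpow_natCast t n, ← Real.rpow_add ht0]
              simp
      rw [Real.norm_eq_abs, abs_of_nonneg (by positivity)]
      exact hfin
    apply Integrable.mono' (g := fun _ => (n.factorial : ℝ) * 16^n)
    · exact integrableOn_const (by simp [Real.volume_Ioc])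
    · exact hmeas.restrict
    · rw [MeasureTheory.ae_restrict_iff' measurableSet_Ioc]
      filter_upwards with t ht using hbound t ht
  have h2 : IntegrableOn (fun t => Real.exp (-1/(16*t)) * t ^ (-c)) (Set.Ioi (1:ℝ)) := by
    apply Integrable.mono' (g := fun t => t ^ (-c)) (integrableOn_Ioi_rpow_of_lt (by linarith) one_pos)
    · exact hmeas.restrict
    · rw [MeasureTheory.ae_restrict_iff' measurableSet_Ioi]
      filter_upwards with t ht
      have ht0 : (0:ℝ) < t := lt_trans one_pos ht
      rw [Real.norm_eq_abs, abs_of_nonneg (by positivity)]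
      calc Real.exp (-1/(16*t)) * t ^ (-c) ≤ 1 * t ^ (-c) := by
            apply mul_le_mul_of_nonneg_right _ (Real.rpow_nonneg ht0.le _)
            rw [Real.exp_le_one_iff, div_nonpos_iff]
            right
            constructor <;> linarith
        _ = t ^ (-c) := one_mul _
  have : Set.Ioi (0:ℝ) = Set.Ioc 0 1 ∪ Set.Ioi 1 := (Set.Ioc_union_Ioi_eq_Ioi zero_le_one).symm
  rw [this]
  exact h1.union h2

set_option maxHeartbeats 1000000 in
lemma deriv_bound (α : ℝ) (hα : 0 < α) {t x : ℝ} (ht : 0 < t) (hx : 0 < x) (hx2 : x < 1/2) :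
    |deriv (fun u => besselHeat α t u 1) x| ≤
      x * ((4:ℝ)^(-((α-1)/2)) / Real.Gamma ((α-1)/2+1)) *
        (Real.exp (-1/(16*t)) * (t ^ (-((α-1)/2+2)) + t ^ (-((α-1)/2+3)))) := by
  set ν := (α-1)/2 with hνdef
  have hν : -(1/2 : ℝ) < ν := by rw [hνdef]; linarith
  have h4t : (0:ℝ) < 4*t := by linarith
  have h2t : (0:ℝ) < 2*t := by linarith
  have hGν : 0 < Real.Gamma (ν+1) := Real.Gamma_pos_of_pos (by linarith)
  set w : ℝ := (2*t)⁻¹ with hw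
  have hwpos : 0 < w := by positivity
  set c0 : ℝ := (4*t)^(-ν) / Real.Gamma (ν+1) with hc0
  have hc0pos : 0 < c0 := div_pos (Real.rpow_pos_of_pos h4t _) hGν
  set s : ℝ := x * w with hs
  have hspos : 0 < s := by positivity
  have hx' : x ∈ Set.Ioo (-1:ℝ) 1 := ⟨by linarith, by linarith⟩
  -- the series and its derivative
  set S : ℝ := ∑' k : ℕ, aCoef ν t k * x^(2*k) with hSdef
  set S' : ℝ := ∑' k : ℕ, aCoef ν t k * ((2*k : ℕ) * x^(2*k-1)) with hS'def
  have hS := hasDerivAt_S hν ht hx'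
  -- derivative of exp factor
  have hinner : HasDerivAt (fun u : ℝ => -(u^2+1)/(4*t)) (-(2*x)/(4*t)) x := by
    have h : HasDerivAt (fun u : ℝ => -(u^2+1)/(4*t)) _ x := (((hasDerivAt_pow 2 x).add_const 1).neg).div_const (4*t)
    convert h using 1
    push_cast
    ring
  have hE := hinner.exp
  set E : ℝ := Real.exp (-(x^2+1)/(4*t)) with hEdef
  have hEpos : 0 < E := Real.exp_pos _
  -- derivative of Hfun
  have hHD : HasDerivAt (Hfun ν t)
      ((2*t)⁻¹ * ((E * (-(2*x)/(4*t))) * S + E * S')) x := by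
    have h := (hE.mul hS).const_mul ((2*t):ℝ)⁻¹
    have hfun : Hfun ν t = fun u => (2*t)⁻¹ *
        (Real.exp (-(u^2+1)/(4*t)) * ∑' k : ℕ, aCoef ν t k * u^(2*k)) := by
      funext u
      rw [Hfun]
      ring
    rw [hfun]
    exact h
  -- identify deriv
  have hev : (fun u => besselHeat α t u 1) =ᶠ[nhds x] Hfun ν t := by
    filter_upwards [Ioi_mem_nhds hx] with u hu
    exact besselHeat_eq_Hfun α ht hu
  have hderiv_eq : deriv (fun u => besselHeat α t u 1) x
      = (2*t)⁻¹ * ((E * (-(2*x)/(4*t))) * S + E * S') := by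
    rw [hev.deriv_eq, hHD.deriv]
  -- bounds on S
  have hacle : ∀ k : ℕ, aCoef ν t k ≤ c0 * w^(2*k) / (Nat.factorial (2*k)) :=
    fun k => aCoef_le hν ht k
  have hSper : ∀ k : ℕ, aCoef ν t k * x^(2*k) ≤ c0 * (s^(2*k)/(Nat.factorial (2*k))) := by
    intro k
    have hxp : (0:ℝ) ≤ x^(2*k) := by positivity
    calc aCoef ν t k * x^(2*k) ≤ (c0 * w^(2*k) / (Nat.factorial (2*k))) * x^(2*k) :=
          mul_le_mul_of_nonneg_right (hacle k) hxp
      _ = c0 * (s^(2*k)/(Nat.factorial (2*k))) := by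
          rw [hs, mul_pow]; ring
  have hsumR : Summable (fun k : ℕ => c0 * (s^(2*k)/(Nat.factorial (2*k)))) :=
    (summable_even s).mul_left c0
  have hsumS : Summable (fun k : ℕ => aCoef ν t k * x^(2*k)) := by
    apply Summable.of_nonneg_of_le (fun k => by
      have := aCoef_nonneg hν ht k; positivity) hSper hsumR
  have hSnonneg : 0 ≤ S := tsum_nonneg (fun k => by
    have := aCoef_nonneg hν ht k; positivity)
  have hSle : S ≤ c0 * Real.exp s := by
    calc S ≤ ∑' k : ℕ, c0 * (s^(2*k)/(Nat.factorial (2*k))) :=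
          hsumS.tsum_le_tsum hSper hsumR
      _ = c0 * ∑' k : ℕ, s^(2*k)/(Nat.factorial (2*k)) := tsum_mul_left
      _ ≤ c0 * Real.exp s := mul_le_mul_of_nonneg_left (tsum_even_le_exp hspos.le) hc0pos.le
  -- bounds on S'
  have hS'per : ∀ k : ℕ, aCoef ν t k * ((2*k : ℕ) * x^(2*k-1)) ≤ c0 * w * (w^(2*k-1)/(((2*k-1).factorial : ℝ))) := by
    intro k
    rcases Nat.eq_zero_or_pos k with hk0 | hkpos
    · subst hk0
      simp only [Nat.mul_zero, Nat.cast_zero, zero_mul, mul_zero]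
      positivity
    · have hxk : x^(2*k-1) ≤ 1 := pow_le_one₀ hx.le (by linarith)
      have hak := aCoef_nonneg hν ht k
      calc aCoef ν t k * ((2*k : ℕ) * x^(2*k-1))
          ≤ aCoef ν t k * ((2*k : ℕ) * 1) := by
            apply mul_le_mul_of_nonneg_left _ hak
            apply mul_le_mul_of_nonneg_left hxk (by positivity)
        _ = aCoef ν t k * (2*(k:ℝ)) := by push_cast; ring
        _ ≤ (c0 * w^(2*k) / (Nat.factorial (2*k))) * (2*(k:ℝ)) :=
            mul_le_mul_of_nonneg_right (hacle k) (by positivity)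
        _ = c0 * w * (w^(2*k-1)/(((2*k-1).factorial : ℝ))) := vstep k hkpos
  have hinj : Function.Injective (fun k : ℕ => 2*k-1) := by
    intro a b hab; simp only at hab; omega
  have hsumV : Summable (fun k : ℕ => c0 * w * (w^(2*k-1)/(((2*k-1).factorial : ℝ)))) :=
    (((Real.summable_pow_div_factorial w).comp_injective hinj).mul_left _)
  have hS'nonneg_term : ∀ k : ℕ, 0 ≤ aCoef ν t k * ((2*k : ℕ) * x^(2*k-1)) := by
    intro k
    have := aCoef_nonneg hν ht k
    positivity
  have hsumS' : Summable (fun k : ℕ => aCoef ν t k * ((2*k : ℕ) * x^(2*k-1))) :=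
    Summable.of_nonneg_of_le hS'nonneg_term hS'per hsumV
  have hS'nonneg : 0 ≤ S' := tsum_nonneg hS'nonneg_term
  have hS'le : S' ≤ x * c0 * w^2 * Real.exp s := by
    have hshift : S' = ∑' j : ℕ, aCoef ν t (j+1) * ((2*(j+1) : ℕ) * x^(2*(j+1)-1)) := by
      rw [hS'def, hsumS'.tsum_eq_zero_add]
      simp
    have hper2 : ∀ j : ℕ, aCoef ν t (j+1) * ((2*(j+1) : ℕ) * x^(2*(j+1)-1))
        ≤ (x * c0 * w^2) * (s^(2*j)/(Nat.factorial (2*j))) := by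
      intro j
      have hidx : 2*(j+1) = 2*j+2 := by ring
      rw [hidx, show 2*j+2-1 = 2*j+1 from by omega]
      have hacle2 := hacle (j+1)
      rw [hidx] at hacle2
      have hfac : ((2*j+2).factorial : ℝ) = (2*(j:ℝ)+2) * ((2*j+1).factorial : ℝ) := by
        rw [show 2*j+2 = (2*j+1)+1 from by omega, Nat.factorial_succ]
        push_cast
        ring
      have hfac2 : ((2*j+1).factorial : ℝ) = (2*(j:ℝ)+1) * ((2*j).factorial : ℝ) := by
        rw [Nat.factorial_succ]
        push_cast
        ring
      have hcast : ((2*j+2 : ℕ) : ℝ) = 2*(j:ℝ)+2 := by push_cast; ring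
      calc aCoef ν t (j+1) * ((2*j+2 : ℕ) * x^(2*j+1))
          ≤ (c0 * w^(2*j+2) / (Nat.factorial (2*j+2))) * ((2*j+2 : ℕ) * x^(2*j+1)) := by
            apply mul_le_mul_of_nonneg_right hacle2 (by positivity)
        _ = c0 * w^(2*j+2) * x^(2*j+1) / ((2*j+1).factorial : ℝ) := by
            rw [hfac, hcast]
            have hme : (2*(j:ℝ)+2) ≠ 0 := by positivity
            have hfe : ((2*j+1).factorial : ℝ) ≠ 0 := by positivity
            field_simp
        _ ≤ c0 * w^(2*j+2) * x^(2*j+1) / ((2*j).factorial : ℝ) := by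
            apply div_le_div_of_nonneg_left (by positivity) (by positivity)
            rw [hfac2]
            nlinarith [(by positivity : (0:ℝ) < ((2*j).factorial : ℝ)), (by positivity : (0:ℝ) ≤ (j:ℝ))]
        _ = (x * c0 * w^2) * (s^(2*j)/(Nat.factorial (2*j))) := by
            rw [hs, mul_pow]
            ring
    have hsumL : Summable (fun j : ℕ => aCoef ν t (j+1) * ((2*(j+1) : ℕ) * x^(2*(j+1)-1))) :=
      (summable_nat_add_iff 1).2 hsumS'
    have hsumR2 : Summable (fun j : ℕ => (x * c0 * w^2) * (s^(2*j)/(Nat.factorial (2*j)))) :=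
      (summable_even s).mul_left _
    calc S' = ∑' j : ℕ, aCoef ν t (j+1) * ((2*(j+1) : ℕ) * x^(2*(j+1)-1)) := hshift
      _ ≤ ∑' j : ℕ, (x * c0 * w^2) * (s^(2*j)/(Nat.factorial (2*j))) :=
          hsumL.tsum_le_tsum hper2 hsumR2
      _ = (x * c0 * w^2) * ∑' j : ℕ, s^(2*j)/(Nat.factorial (2*j)) := tsum_mul_left
      _ ≤ (x * c0 * w^2) * Real.exp s :=
          mul_le_mul_of_nonneg_left (tsum_even_le_exp hspos.le) (by positivity)
  -- combine
  have hD : deriv (fun u => besselHeat α t u 1) x = w * E * (S' - x * w * S) := by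
    rw [hderiv_eq, hw]
    have : -(2*x)/(4*t) = -(x * (2*t)⁻¹) := by
      field_simp
      ring
    rw [this]
    ring
  have habs : |deriv (fun u => besselHeat α t u 1) x| ≤ w * E * (x * c0 * w^2 * Real.exp s + x * w * (c0 * Real.exp s)) := by
    rw [hD, abs_mul, abs_mul, abs_of_pos hwpos, abs_of_pos hEpos]
    apply mul_le_mul_of_nonneg_left _ (by positivity)
    rw [abs_le]
    constructor
    · have h1 : x * w * S ≤ x * w * (c0 * Real.exp s) :=
        mul_le_mul_of_nonneg_left hSle (by positivity)
      nlinarith [hS'nonneg, mul_nonneg (mul_nonneg hx.le hwpos.le) hSnonneg]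
    · have h1 : x * w * S ≥ 0 := by positivity
      nlinarith [hS'le]
  have hexpcomb : E * Real.exp s ≤ Real.exp (-1/(16*t)) := by
    rw [hEdef, ← Real.exp_add]
    apply Real.exp_le_exp.2
    have heq : -(x^2+1)/(4*t) + s = (-(4*(x^2+1)) + 8*x)/(16*t) := by
      rw [hs, hw]
      rw [div_add' _ _ _ (by positivity), div_eq_div_iff (by positivity) (by positivity)]
      field_simp
      ring
    rw [heq, div_le_div_iff₀ (by linarith) (by linarith)]
    nlinarith [mul_pos (mul_pos (by linarith : (0:ℝ) < 1 - 2*x) (by linarith : (0:ℝ) < 3 - 2*x)) ht]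
  -- final conversion to rpow form
  set K : ℝ := (4:ℝ)^(-ν) / Real.Gamma (ν+1) with hK
  have hKpos : 0 < K := div_pos (Real.rpow_pos_of_pos (by norm_num) _) hGν
  have hc0K : c0 = K * t^(-ν) := by
    rw [hc0, hK, Real.mul_rpow (by norm_num : (0:ℝ) ≤ 4) ht.le]
    ring
  have hw2 : w^2 ≤ t^(-(2:ℝ)) := by
    rw [Real.rpow_neg ht.le, show (2:ℝ) = ((2:ℕ):ℝ) from by norm_num, Real.rpow_natCast,
      hw, inv_pow]
    apply inv_anti₀ (by positivity)
    nlinarith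
  have hw3 : w^3 ≤ t^(-(3:ℝ)) := by
    rw [Real.rpow_neg ht.le, show (3:ℝ) = ((3:ℕ):ℝ) from by norm_num, Real.rpow_natCast,
      hw, inv_pow]
    apply inv_anti₀ (by positivity)
    have h8 : (2*t)^3 = 8*t^3 := by ring
    nlinarith [pow_pos ht 3]
  have hfinal : w * E * (x * c0 * w^2 * Real.exp s + x * w * (c0 * Real.exp s))
      ≤ x * K * (Real.exp (-1/(16*t)) * (t ^ (-(ν+2)) + t ^ (-(ν+3)))) := by
    have hlhs : w * E * (x * c0 * w^2 * Real.exp s + x * w * (c0 * Real.exp s))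
        = x * c0 * (w^3 + w^2) * (E * Real.exp s) := by ring
    rw [hlhs, hc0K]
    have h1 : t^(-ν) * (w^3 + w^2) ≤ t ^ (-(ν+3)) + t ^ (-(ν+2)) := by
      have ha : t^(-ν) * w^3 ≤ t ^ (-(ν+3)) := by
        calc t^(-ν) * w^3 ≤ t^(-ν) * t^(-(3:ℝ)) :=
              mul_le_mul_of_nonneg_left hw3 (Real.rpow_nonneg ht.le _)
          _ = t ^ (-(ν+3)) := by
              rw [← Real.rpow_add ht]; congr 1; ring
      have hb : t^(-ν) * w^2 ≤ t ^ (-(ν+2)) := by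
        calc t^(-ν) * w^2 ≤ t^(-ν) * t^(-(2:ℝ)) :=
              mul_le_mul_of_nonneg_left hw2 (Real.rpow_nonneg ht.le _)
          _ = t ^ (-(ν+2)) := by
              rw [← Real.rpow_add ht]; congr 1; ring
      calc t^(-ν) * (w^3 + w^2) = t^(-ν) * w^3 + t^(-ν) * w^2 := by ring
        _ ≤ t ^ (-(ν+3)) + t ^ (-(ν+2)) := add_le_add ha hb
    calc x * (K * t^(-ν)) * (w^3 + w^2) * (E * Real.exp s)
        ≤ x * (K * t^(-ν)) * (w^3 + w^2) * Real.exp (-1/(16*t)) := by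
          apply mul_le_mul_of_nonneg_left hexpcomb
          positivity
      _ = (x * K * Real.exp (-1/(16*t))) * (t^(-ν) * (w^3 + w^2)) := by ring
      _ ≤ (x * K * Real.exp (-1/(16*t))) * (t ^ (-(ν+3)) + t ^ (-(ν+2))) := by
          apply mul_le_mul_of_nonneg_left h1
          positivity
      _ = x * K * (Real.exp (-1/(16*t)) * (t ^ (-(ν+2)) + t ^ (-(ν+3)))) := by ring
  exact habs.trans hfinal


/-- |R̃(x,1)| ≤ Cx for 0 < x < 1/2. -/
theorem stmt2 (α : ℝ) (hα : 0 < α) :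
    ∃ C > (0:ℝ), ∀ x : ℝ, 0 < x → x < 1 / 2 → |besselRiesz α x 1| ≤ C * x := by
  set ν := (α-1)/2 with hνdef
  have hν : -(1/2 : ℝ) < ν := by rw [hνdef]; linarith
  have hGν : 0 < Real.Gamma (ν+1) := Real.Gamma_pos_of_pos (by linarith)
  set K : ℝ := (4:ℝ)^(-ν) / Real.Gamma (ν+1) with hK
  have hKpos : 0 < K := div_pos (Real.rpow_pos_of_pos (by norm_num) _) hGν
  have hint1 : IntegrableOn (fun t => Real.exp (-1/(16*t)) * t ^ (-(ν+5/2))) (Set.Ioi (0:ℝ)) :=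
    integrable_psi (by linarith)
  have hint2 : IntegrableOn (fun t => Real.exp (-1/(16*t)) * t ^ (-(ν+7/2))) (Set.Ioi (0:ℝ)) :=
    integrable_psi (by linarith)
  have hintψ : IntegrableOn
      (fun t => Real.exp (-1/(16*t)) * t ^ (-(ν+5/2)) + Real.exp (-1/(16*t)) * t ^ (-(ν+7/2)))
      (Set.Ioi (0:ℝ)) := hint1.add hint2
  set J : ℝ := ∫ t in Set.Ioi (0:ℝ),
      (Real.exp (-1/(16*t)) * t ^ (-(ν+5/2)) + Real.exp (-1/(16*t)) * t ^ (-(ν+7/2))) with hJdef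
  have hJ : 0 ≤ J := by
    apply setIntegral_nonneg measurableSet_Ioi
    intro t ht
    have ht0 : (0:ℝ) < t := ht
    positivity
  refine ⟨K*J + 1, by positivity, ?_⟩
  intro x hx hx2
  have hptw : ∀ t ∈ Set.Ioi (0:ℝ),
      ‖deriv (fun u => besselHeat α t u 1) x / Real.sqrt t‖ ≤
        x * K * (Real.exp (-1/(16*t)) * t ^ (-(ν+5/2)) + Real.exp (-1/(16*t)) * t ^ (-(ν+7/2))) := by
    intro t ht
    have ht0 : (0:ℝ) < t := ht
    have hsq : 0 < Real.sqrt t := Real.sqrt_pos.2 ht0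
    rw [norm_div, Real.norm_eq_abs, Real.norm_eq_abs, abs_of_nonneg (Real.sqrt_nonneg t)]
    have hb := deriv_bound α hα ht0 hx hx2
    rw [div_le_iff₀ hsq]
    have hkey : (Real.exp (-1/(16*t)) * t ^ (-(ν+5/2)) + Real.exp (-1/(16*t)) * t ^ (-(ν+7/2)))
        * Real.sqrt t = Real.exp (-1/(16*t)) * (t ^ (-(ν+2)) + t ^ (-(ν+3))) := by
      rw [Real.sqrt_eq_rpow]
      have e1 : t^(-(ν+5/2)) * t^((1:ℝ)/2) = t^(-(ν+2)) := by
        rw [← Real.rpow_add ht0]; congr 1; ring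
      have e2 : t^(-(ν+7/2)) * t^((1:ℝ)/2) = t^(-(ν+3)) := by
        rw [← Real.rpow_add ht0]; congr 1; ring
      calc (Real.exp (-1/(16*t)) * t ^ (-(ν+5/2)) + Real.exp (-1/(16*t)) * t ^ (-(ν+7/2))) * t^((1:ℝ)/2)
          = Real.exp (-1/(16*t)) * (t ^ (-(ν+5/2)) * t^((1:ℝ)/2))
            + Real.exp (-1/(16*t)) * (t ^ (-(ν+7/2)) * t^((1:ℝ)/2)) := by ring
        _ = Real.exp (-1/(16*t)) * (t ^ (-(ν+2)) + t ^ (-(ν+3))) := by rw [e1, e2]; ring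
    calc |deriv (fun u => besselHeat α t u 1) x|
        ≤ x * ((4:ℝ)^(-ν) / Real.Gamma (ν+1)) *
            (Real.exp (-1/(16*t)) * (t ^ (-(ν+2)) + t ^ (-(ν+3)))) := hb
      _ = x * K * ((Real.exp (-1/(16*t)) * t ^ (-(ν+5/2)) + Real.exp (-1/(16*t)) * t ^ (-(ν+7/2)))
            * Real.sqrt t) := by rw [hkey, hK]
      _ = x * K * (Real.exp (-1/(16*t)) * t ^ (-(ν+5/2)) + Real.exp (-1/(16*t)) * t ^ (-(ν+7/2)))
            * Real.sqrt t := by ring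
  have h1 : |besselRiesz α x 1| ≤
      ∫ t in Set.Ioi (0:ℝ), ‖deriv (fun u => besselHeat α t u 1) x / Real.sqrt t‖ := by
    rw [besselRiesz, ← Real.norm_eq_abs]
    exact norm_integral_le_integral_norm _
  have h2 : (∫ t in Set.Ioi (0:ℝ), ‖deriv (fun u => besselHeat α t u 1) x / Real.sqrt t‖)
      ≤ ∫ t in Set.Ioi (0:ℝ), x * K *
        (Real.exp (-1/(16*t)) * t ^ (-(ν+5/2)) + Real.exp (-1/(16*t)) * t ^ (-(ν+7/2))) := by
    apply integral_mono_of_nonneg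
    · filter_upwards with t using norm_nonneg _
    · exact hintψ.const_mul (x*K)
    · exact (ae_restrict_iff' measurableSet_Ioi).2
        (Filter.Eventually.of_forall (fun t ht => hptw t ht))
  have h3 : (∫ t in Set.Ioi (0:ℝ), x * K *
        (Real.exp (-1/(16*t)) * t ^ (-(ν+5/2)) + Real.exp (-1/(16*t)) * t ^ (-(ν+7/2))))
      = x * K * J := by
    rw [hJdef, ← integral_const_mul]
  have h4 : |besselRiesz α x 1| ≤ x * K * J := by
    rw [← h3]
    exact h1.trans h2
  calc |besselRiesz α x 1| ≤ x * K * J := h4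
    _ ≤ (K*J + 1) * x := by nlinarith [mul_nonneg hKpos.le hJ]
end

section
/- There exists a constant C > 0 such that for every y₀ > 0 and every y ∈ B(y₀, ρ(y₀)), ∫₀^∞ | φ((x-y)/ρ(y)) - φ((x-y)/ρ(y₀)) | · |x^{α+1} - y^{α+1}|^{-1} dμ(x) ≤ C. -/
open MeasureTheory Real Set Filter Topology

lemma rhoAux_pos (y : ℝ) : 0 < rhoAux y := by
  unfold rhoAux; split
  · norm_num
  · next h => have : (1:ℝ) ≤ y := not_lt.1 h; positivity

lemma rhoAux_comp {y₀ y : ℝ} (hy₀ : 0 < y₀) (hy : 0 < y) (h : |y - y₀| < rhoAux y₀) :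
    rhoAux y₀ ≤ 2 * rhoAux y ∧ rhoAux y ≤ 2 * rhoAux y₀ := by
  rw [abs_lt] at h
  unfold rhoAux at *
  rcases lt_or_ge y 1 with h1 | h1 <;> rcases lt_or_ge y₀ 1 with h2 | h2
  · rw [if_pos h1, if_pos h2] at *; norm_num
  · rw [if_pos h1, if_neg (not_lt.2 h2)] at *
    have e : y₀ * y₀⁻¹ = 1 := mul_inv_cancel₀ (by linarith)
    have hyi2 : 0 < y₀⁻¹ := by positivity
    constructor <;> nlinarith [sq_nonneg (y₀ - 2)]
  · rw [if_neg (not_lt.2 h1), if_pos h2] at *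
    have e : y * y⁻¹ = 1 := mul_inv_cancel₀ (by linarith)
    have hyi : 0 < y⁻¹ := by positivity
    constructor <;> nlinarith
  · rw [if_neg (not_lt.2 h1), if_neg (not_lt.2 h2)] at *
    have e : y * y⁻¹ = 1 := mul_inv_cancel₀ (by linarith)
    have e2 : y₀ * y₀⁻¹ = 1 := mul_inv_cancel₀ (by linarith)
    have hyi : 0 < y⁻¹ := by positivity
    have hyi2 : 0 < y₀⁻¹ := by positivity
    constructor <;> nlinarith [sq_nonneg (y₀ - 2), mul_pos hyi hyi2, sq_nonneg (y₀⁻¹ - 1)]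

lemma rpow_key {α x y : ℝ} (hα : 0 < α) (hx : 0 < x) (hy : 0 < y) :
    x ^ α * |x - y| ≤ |x ^ (α + 1) - y ^ (α + 1)| := by
  rcases le_total y x with hxy | hxy
  · have h1 : y ^ α ≤ x ^ α := Real.rpow_le_rpow hy.le hxy hα.le
    have ex : x ^ (α + 1) = x ^ α * x := by rw [Real.rpow_add hx, Real.rpow_one]
    have ey : y ^ (α + 1) = y ^ α * y := by rw [Real.rpow_add hy, Real.rpow_one]
    rw [abs_of_nonneg (by linarith),
      abs_of_nonneg (by nlinarith [Real.rpow_pos_of_pos hy α])]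
    nlinarith [Real.rpow_pos_of_pos hy α]
  · have h1 : x ^ α ≤ y ^ α := Real.rpow_le_rpow hx.le hxy hα.le
    have ex : x ^ (α + 1) = x ^ α * x := by rw [Real.rpow_add hx, Real.rpow_one]
    have ey : y ^ (α + 1) = y ^ α * y := by rw [Real.rpow_add hy, Real.rpow_one]
    rw [abs_of_nonpos (by linarith),
      abs_of_nonpos (by nlinarith [Real.rpow_pos_of_pos hx α])]
    nlinarith [Real.rpow_pos_of_pos hx α]

/-- estimate (4.3). -/
theorem stmt15 (α : ℝ) (hα : 0 < α) (φ : ℝ → ℝ) (hφ : isGoodPhi φ) :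
    ∃ C > (0:ℝ), ∀ y₀ > (0:ℝ), ∀ y : ℝ, 0 < y → |y - y₀| < rhoAux y₀ →
      ∫⁻ x, ENNReal.ofReal
          (|φ ((x - y) / rhoAux y) - φ ((x - y) / rhoAux y₀)| *
            |x ^ (α + 1) - y ^ (α + 1)|⁻¹) ∂(muMeas α) ≤ ENNReal.ofReal C := by
  obtain ⟨hφ0, hφsm, hφsupp, hφ1⟩ := hφ
  -- max of φ
  obtain ⟨z, hz, hzmax'⟩ := isCompact_Icc.exists_isMaxOn
    (Set.nonempty_Icc.2 (by norm_num : (-2:ℝ) ≤ 2)) hφsm.continuous.continuousOn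
  have hzmax : ∀ t ∈ Set.Icc (-2:ℝ) 2, φ t ≤ φ z := fun t ht => hzmax' ht
  set M := φ z with hMdef
  have hM1 : 1 ≤ M := by
    have h0 : φ 0 = 1 := hφ1 0 (by norm_num)
    have := hzmax 0 (by norm_num)
    linarith
  have hMbd : ∀ t : ℝ, φ t ≤ M := by
    intro t
    by_cases ht : t ∈ Set.Icc (-2:ℝ) 2
    · exact hzmax t ht
    · have : t ∉ Function.support φ := fun hs => ht (Ioo_subset_Icc_self (hφsupp hs))
      rw [Function.notMem_support.1 this]; linarith
  have hφzero : ∀ t : ℝ, 2 ≤ |t| → φ t = 0 := by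
    intro t ht
    by_contra hne
    have := hφsupp (Function.mem_support.2 hne)
    rw [Set.mem_Ioo] at this
    have h2 : |t| < 2 := abs_lt.2 this
    linarith
  refine ⟨64 * M / 3, by linarith, ?_⟩
  intro y₀ hy₀ y hy hyy
  set r₀ := rhoAux y₀ with hr₀def
  set r := rhoAux y with hrdef
  have hr₀ : 0 < r₀ := rhoAux_pos y₀
  have hr : 0 < r := rhoAux_pos y
  obtain ⟨hc1, hc2⟩ := rhoAux_comp hy₀ hy hyy
  -- measurable integrand
  set F : ℝ → ENNReal := fun x => ENNReal.ofReal
      (|φ ((x - y) / r) - φ ((x - y) / r₀)| * |x ^ (α + 1) - y ^ (α + 1)|⁻¹) with hFdef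
  have hFm : Measurable F := by
    apply Measurable.ennreal_ofReal
    apply Measurable.mul
    · have : Continuous fun x : ℝ => φ ((x - y) / r) - φ ((x - y) / r₀) :=
        (hφsm.continuous.comp (by continuity)).sub (hφsm.continuous.comp (by continuity))
      exact this.abs.measurable
    · have h1 : Measurable fun x : ℝ => x ^ (α + 1) := by fun_prop
      exact ((h1.sub measurable_const).abs).inv
  have hdm : Measurable fun x : ℝ => ENNReal.ofReal (x ^ α) := by fun_prop
  rw [show muMeas α = (volume.restrict (Set.Ioi (0:ℝ))).withDensity
      (fun x => ENNReal.ofReal (x ^ α)) from rfl,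
    lintegral_withDensity_eq_lintegral_mul _ hdm hFm]
  have key : ∀ x ∈ Set.Ioi (0:ℝ),
      ((fun x => ENNReal.ofReal (x ^ α)) * F) x ≤
      (Set.Ioo (y - 4*r₀) (y + 4*r₀)).indicator
        (fun _ => ENNReal.ofReal (8 * M / (3 * r₀))) x := by
    intro x hx
    rw [Set.mem_Ioi] at hx
    simp only [Pi.mul_apply]
    by_cases hx4 : x ∈ Set.Ioo (y - 4*r₀) (y + 4*r₀)
    · rw [Set.indicator_of_mem hx4]
      by_cases hclose : |x - y| < 3 * r₀ / 4
      · have e1 : φ ((x - y) / r) = 1 := by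
          apply hφ1
          rw [abs_div, abs_of_pos hr, div_le_iff₀ hr]
          nlinarith [abs_nonneg (x - y)]
        have e2 : φ ((x - y) / r₀) = 1 := by
          apply hφ1
          rw [abs_div, abs_of_pos hr₀, div_le_iff₀ hr₀]
          nlinarith [abs_nonneg (x - y)]
        rw [hFdef]
        simp [e1, e2]
      · push_neg at hclose
        rw [hFdef, ← ENNReal.ofReal_mul (Real.rpow_nonneg hx.le α)]
        apply ENNReal.ofReal_le_ofReal
        have hxy : x ≠ y := by
          intro he; rw [he, sub_self, abs_zero] at hclose; nlinarith
        have habs : 0 < |x - y| := by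
          rw [abs_pos]; exact sub_ne_zero.2 hxy
        have hkey := rpow_key hα hx hy
        have hxa : 0 < x ^ α := Real.rpow_pos_of_pos hx α
        have hApos : 0 < |x ^ (α + 1) - y ^ (α + 1)| :=
          lt_of_lt_of_le (by positivity) hkey
        have hdiff : |φ ((x - y) / r) - φ ((x - y) / r₀)| ≤ 2 * M := by
          rw [abs_sub_le_iff]
          constructor <;> nlinarith [hMbd ((x - y) / r), hMbd ((x - y) / r₀),
            hφ0 ((x - y) / r), hφ0 ((x - y) / r₀)]
        have hAinv : |x ^ (α + 1) - y ^ (α + 1)|⁻¹ ≤ (x ^ α * |x - y|)⁻¹ :=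
          inv_anti₀ (by positivity) hkey
        calc x ^ α * (|φ ((x - y) / r) - φ ((x - y) / r₀)| * |x ^ (α + 1) - y ^ (α + 1)|⁻¹)
            ≤ x ^ α * (2 * M * (x ^ α * |x - y|)⁻¹) := by
              apply mul_le_mul_of_nonneg_left _ hxa.le
              exact mul_le_mul hdiff hAinv (by positivity) (by linarith)
          _ = 2 * M / |x - y| := by field_simp
          _ ≤ 2 * M / (3 * r₀ / 4) := by
              apply div_le_div_of_nonneg_left (by linarith) (by positivity) hclose
          _ = 8 * M / (3 * r₀) := by field_simp; ring
    · rw [Set.indicator_of_notMem hx4]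
      have hfar : 4 * r₀ ≤ |x - y| := by
        rw [Set.mem_Ioo, not_and_or] at hx4
        rcases hx4 with h | h <;> push_neg at h
        · calc 4 * r₀ ≤ y - x := by linarith
            _ ≤ |x - y| := by rw [abs_sub_comm]; exact le_abs_self _
        · calc 4 * r₀ ≤ x - y := by linarith
            _ ≤ |x - y| := le_abs_self _
      have e1 : φ ((x - y) / r) = 0 := by
        apply hφzero
        rw [abs_div, abs_of_pos hr, le_div_iff₀ hr]
        nlinarith
      have e2 : φ ((x - y) / r₀) = 0 := by
        apply hφzero
        rw [abs_div, abs_of_pos hr₀, le_div_iff₀ hr₀]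
        nlinarith
      rw [hFdef]
      simp [e1, e2]
  calc ∫⁻ x in Set.Ioi (0:ℝ), ((fun x => ENNReal.ofReal (x ^ α)) * F) x
      ≤ ∫⁻ x in Set.Ioi (0:ℝ), (Set.Ioo (y - 4*r₀) (y + 4*r₀)).indicator
          (fun _ => ENNReal.ofReal (8 * M / (3 * r₀))) x :=
        setLIntegral_mono' measurableSet_Ioi key
    _ ≤ ∫⁻ x, (Set.Ioo (y - 4*r₀) (y + 4*r₀)).indicator
          (fun _ => ENNReal.ofReal (8 * M / (3 * r₀))) x :=
        setLIntegral_le_lintegral _ _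
    _ = ENNReal.ofReal (8 * M / (3 * r₀)) * volume (Set.Ioo (y - 4*r₀) (y + 4*r₀)) :=
        lintegral_indicator_const measurableSet_Ioo _
    _ ≤ ENNReal.ofReal (64 * M / 3) := by
        rw [Real.volume_Ioo, ← ENNReal.ofReal_mul (by positivity)]
        apply ENNReal.ofReal_le_ofReal
        have h8 : y + 4*r₀ - (y - 4*r₀) = 8 * r₀ := by ring
        rw [h8]
        have he : 8 * M / (3 * r₀) * (8 * r₀) = 64 * M / 3 := by
          field_simp
          ring
        rw [he]
end

section
/- The quantity sup_{y>0} ∫_{x>0, (3/2)ρ(y) < |x-y| < 4ρ(y)} |x^{α+1} - y^{α+1}|^{-1} dμ(x) is finite. -/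
open MeasureTheory Real Set Filter Topology

lemma key_ineq {α x y : ℝ} (hα : 0 ≤ α) (hx : 0 < x) (hy : 0 < y) :
    x ^ α * |x - y| ≤ |x ^ (α + 1) - y ^ (α + 1)| := by
  have hxα : (0:ℝ) < x ^ α := Real.rpow_pos_of_pos hx α
  have hyα : (0:ℝ) < y ^ α := Real.rpow_pos_of_pos hy α
  rw [Real.rpow_add_one hx.ne', Real.rpow_add_one hy.ne']
  rcases le_total x y with h | h
  · have hle : x ^ α ≤ y ^ α := Real.rpow_le_rpow hx.le h hα
    rw [abs_of_nonpos (by linarith : x - y ≤ 0),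
      abs_of_nonpos (by nlinarith : x ^ α * x - y ^ α * y ≤ 0)]
    nlinarith
  · have hle : y ^ α ≤ x ^ α := Real.rpow_le_rpow hy.le h hα
    rw [abs_of_nonneg (by linarith : 0 ≤ x - y),
      abs_of_nonneg (by nlinarith : 0 ≤ x ^ α * x - y ^ α * y)]
    nlinarith

/-- uniform integral bound on the annulus (3/2)ρ(y) < |x-y| < 4ρ(y). -/
theorem stmt16 (α : ℝ) (hα : 0 < α) :
    ∃ C : ℝ, ∀ y > (0:ℝ),
      ∫⁻ x in {x | 3 / 2 * rhoAux y < |x - y| ∧ |x - y| < 4 * rhoAux y},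
          ENNReal.ofReal |x ^ (α + 1) - y ^ (α + 1)|⁻¹ ∂(muMeas α) ≤ ENNReal.ofReal C := by
  refine ⟨16 / 3, fun y hy => ?_⟩
  have hρ : 0 < rhoAux y := by
    rw [rhoAux]; split_ifs
    · norm_num
    · exact inv_pos.mpr hy
  set ρ := rhoAux y with hρdef
  set S : Set ℝ := {x | 3 / 2 * ρ < |x - y| ∧ |x - y| < 4 * ρ} with hSdef
  have hSmeas : MeasurableSet S := by
    have : S = (fun x => |x - y|) ⁻¹' Set.Ioi (3 / 2 * ρ) ∩
        (fun x => |x - y|) ⁻¹' Set.Iio (4 * ρ) := rfl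
    rw [this]
    have hm : Measurable fun x : ℝ => |x - y| := (measurable_id.sub_const y).abs
    exact (hm measurableSet_Ioi).inter (hm measurableSet_Iio)
  have hfmeas : Measurable fun x : ℝ => ENNReal.ofReal (x ^ α) :=
    by measurability
  have hgmeas : Measurable fun x : ℝ =>
      ENNReal.ofReal |x ^ (α + 1) - y ^ (α + 1)|⁻¹ :=
    by measurability
  rw [muMeas, restrict_withDensity hSmeas,
    lintegral_withDensity_eq_lintegral_mul _ hfmeas hgmeas,
    Measure.restrict_restrict hSmeas]
  calc ∫⁻ x in S ∩ Set.Ioi 0,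
        ((fun x : ℝ => ENNReal.ofReal (x ^ α)) * fun x : ℝ =>
          ENNReal.ofReal |x ^ (α + 1) - y ^ (α + 1)|⁻¹) x
      ≤ ∫⁻ _ in S ∩ Set.Ioi 0, ENNReal.ofReal (2 / (3 * ρ)) := by
        refine setLIntegral_mono' (hSmeas.inter measurableSet_Ioi) fun x hx => ?_
        obtain ⟨⟨h1, h2⟩, hx0⟩ := hx
        have hxpos : (0:ℝ) < x := hx0
        have hxα : (0:ℝ) < x ^ α := Real.rpow_pos_of_pos hxpos α
        have hkey := key_ineq hα.le hxpos hy
        have h2' : x ^ α * (3 / 2 * ρ) ≤ |x ^ (α + 1) - y ^ (α + 1)| :=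
          le_trans (by nlinarith) hkey
        have habs : (0:ℝ) < |x ^ (α + 1) - y ^ (α + 1)| := by nlinarith
        simp only [Pi.mul_apply]
        rw [← ENNReal.ofReal_mul hxα.le]
        apply ENNReal.ofReal_le_ofReal
        rw [← div_eq_mul_inv, div_le_div_iff₀ habs (by positivity)]
        nlinarith
    _ = ENNReal.ofReal (2 / (3 * ρ)) * volume (S ∩ Set.Ioi 0) := by
        rw [setLIntegral_const]
    _ ≤ ENNReal.ofReal (2 / (3 * ρ)) * ENNReal.ofReal (8 * ρ) := by
        gcongr
        have hsub : S ∩ Set.Ioi 0 ⊆ Set.Ioo (y - 4 * ρ) (y + 4 * ρ) := by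
          rintro x ⟨⟨_, h2⟩, _⟩
          have := abs_lt.mp h2
          constructor <;> linarith [this.1, this.2]
        calc volume (S ∩ Set.Ioi 0) ≤ volume (Set.Ioo (y - 4 * ρ) (y + 4 * ρ)) :=
              measure_mono hsub
          _ = ENNReal.ofReal (8 * ρ) := by rw [Real.volume_Ioo]; ring_nf
    _ = ENNReal.ofReal (16 / 3) := by
        rw [← ENNReal.ofReal_mul (by positivity)]
        congr 1
        field_simp
        ring
end
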